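/- Let g be a finite simple graph on ordered vertices v_1, …, v_n, let s_1 ≤ … ≤ s_n be a nondecreasing sequence of nonnegative integers, and suppose that condition (ii) holds: for all i ∈ [n], v_i has at most s_i neighbors v_j with j > i. Then condition (i) (for all i ∈ [n], v_i has at least s_i neighbors v_j with s_j ≥ s_i) holds if and only if the shell index of each vertex satisfies s(v_i) = s_i for all i ∈ [n]. -/

import Mathlib

/-!
Under (ii) and monotonicity, `s(v_i) ≤ s_i` always holds: if `S` spans a subgraph of minimum
degree at least `k` and `v_m` is its least vertex, then all of the `≥ k` neighbours of `v_m`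
inside `S` come after it, so `k ≤ s_m ≤ s_i` for every `v_i ∈ S`. If (i) holds, then for every
`c` the vertices `v_j` with `s_j ≥ c` span a subgraph of minimum degree at least `c`, which gives
`s(v_i) ≥ s_i`. Conversely, every vertex `v` has at least `s(v)` neighbours `w` with
`s(w) ≥ s(v)`, namely its neighbours inside a witness of `v ∈ H_{s(v)}`; this is (i) for `s = s(·)`.
-/

/-- `MinDegGE G k S`: the subgraph of `G` induced on the vertex set `S` has minimum
degree at least `k`, i.e. every vertex of `S` has at least `k` neighbors inside `S`. -/
def MinDegGE {V : Type*} (G : SimpleGraph V) (k : ℕ) (S : Set V) : Prop :=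
  ∀ v ∈ S, k ≤ Nat.card {w : V // G.Adj v w ∧ w ∈ S}

/-- The vertex set of the `k`-core of `G`: the union of all vertex subsets inducing a
subgraph of minimum degree at least `k`. -/
def coreVerts {V : Type*} (G : SimpleGraph V) (k : ℕ) : Set V :=
  {v | ∃ S : Set V, MinDegGE G k S ∧ v ∈ S}

/-- The shell index of `v`: the largest `k` such that `v` belongs to the `k`-core. -/
noncomputable def shellIndex {V : Type*} (G : SimpleGraph V) (v : V) : ℕ :=
  sSup {k : ℕ | v ∈ coreVerts G k}

/-- `n_j(g)`: the number of vertices of `G` with shell index `j`. -/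
noncomputable def shellCount {V : Type*} (G : SimpleGraph V) (j : ℕ) : ℕ :=
  Nat.card {v : V // shellIndex G v = j}

section ShellIndex

variable {V : Type*} (G : SimpleGraph V)

lemma card_adj_and_le_card_adj_and [Finite V] {v : V} {p q : V → Prop}
    (h : ∀ w, G.Adj v w → p w → q w) :
    Nat.card {w : V // G.Adj v w ∧ p w} ≤ Nat.card {w : V // G.Adj v w ∧ q w} :=
  Nat.card_mono (Set.toFinite _) fun w ⟨hadj, hw⟩ => ⟨hadj, h w hadj hw⟩

lemma mem_coreVerts_zero (v : V) : v ∈ coreVerts G 0 :=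
  ⟨{v}, fun _ _ => Nat.zero_le _, rfl⟩

lemma bddAbove_setOf_mem_coreVerts [Finite V] (v : V) :
    BddAbove {k : ℕ | v ∈ coreVerts G k} :=
  ⟨Nat.card V, fun _ ⟨_, hS, hvS⟩ => (hS v hvS).trans (Finite.card_subtype_le _)⟩

lemma le_shellIndex_of_mem_coreVerts [Finite V] {v : V} {k : ℕ} (h : v ∈ coreVerts G k) :
    k ≤ shellIndex G v :=
  le_csSup (bddAbove_setOf_mem_coreVerts G v) h

lemma shellIndex_le_of_forall_mem_coreVerts {v : V} {b : ℕ}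
    (h : ∀ k, v ∈ coreVerts G k → k ≤ b) : shellIndex G v ≤ b :=
  csSup_le ⟨0, mem_coreVerts_zero G v⟩ h

lemma mem_coreVerts_shellIndex [Finite V] (v : V) : v ∈ coreVerts G (shellIndex G v) :=
  Nat.sSup_mem ⟨0, mem_coreVerts_zero G v⟩ (bddAbove_setOf_mem_coreVerts G v)

lemma shellIndex_le_card_adj_shellIndex_le [Finite V] (v : V) :
    shellIndex G v ≤ Nat.card {w : V // G.Adj v w ∧ shellIndex G v ≤ shellIndex G w} := by
  obtain ⟨S, hS, hvS⟩ := mem_coreVerts_shellIndex G v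
  calc shellIndex G v ≤ Nat.card {w : V // G.Adj v w ∧ w ∈ S} := hS v hvS
    _ ≤ _ := card_adj_and_le_card_adj_and G fun w _ hwS =>
      le_shellIndex_of_mem_coreVerts G ⟨S, hS, hwS⟩

lemma minDegGE_setOf_le {s : V → ℕ} [Finite V]
    (h1 : ∀ v, s v ≤ Nat.card {w : V // G.Adj v w ∧ s v ≤ s w}) (c : ℕ) :
    MinDegGE G c {j | c ≤ s j} := fun v hv =>
  calc c ≤ s v := hv
    _ ≤ Nat.card {w : V // G.Adj v w ∧ s v ≤ s w} := h1 v
    _ ≤ _ := card_adj_and_le_card_adj_and G fun _ _ hw => hv.trans hw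

lemma le_shellIndex_of_le_card_adj {s : V → ℕ} [Finite V]
    (h1 : ∀ v, s v ≤ Nat.card {w : V // G.Adj v w ∧ s v ≤ s w}) (v : V) :
    s v ≤ shellIndex G v :=
  le_shellIndex_of_mem_coreVerts G ⟨_, minDegGE_setOf_le G h1 (s v), le_refl (s v)⟩

lemma le_of_mem_coreVerts_of_card_adj_lt_le [LinearOrder V] [Finite V] {s : V → ℕ}
    (hmono : Monotone s) (h2 : ∀ i, Nat.card {j : V // G.Adj i j ∧ i < j} ≤ s i)
    {v : V} {k : ℕ} (hv : v ∈ coreVerts G k) : k ≤ s v := by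
  obtain ⟨S, hS, hvS⟩ := hv
  obtain ⟨m, hmS, hmin⟩ := Set.exists_min_image S id (Set.toFinite S) ⟨v, hvS⟩
  calc k ≤ Nat.card {w : V // G.Adj m w ∧ w ∈ S} := hS m hmS
    _ ≤ Nat.card {j : V // G.Adj m j ∧ m < j} := card_adj_and_le_card_adj_and G
        fun w hadj hwS => (hmin w hwS).lt_of_ne hadj.ne
    _ ≤ s m := h2 m
    _ ≤ s v := hmono (hmin v hvS)

lemma shellIndex_le_of_card_adj_lt_le [LinearOrder V] [Finite V] {s : V → ℕ}
    (hmono : Monotone s) (h2 : ∀ i, Nat.card {j : V // G.Adj i j ∧ i < j} ≤ s i) (v : V) :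
    shellIndex G v ≤ s v :=
  shellIndex_le_of_forall_mem_coreVerts G fun _ =>
    le_of_mem_coreVerts_of_card_adj_lt_le G hmono h2

end ShellIndex

/-- If `g` is a graph on ordered vertices `v_1, …, v_n`,
`s_1 ≤ … ≤ s_n` is nondecreasing, and condition (ii) holds (each `v_i` has at most
`s_i` neighbors `v_j` with `j > i`), then condition (i) (each `v_i` has at least `s_i`
neighbors `v_j` with `s_j ≥ s_i`) holds if and only if the shell index of each `v_i`
equals `s_i`. -/
theorem condition_one_iff_shellIndex_eq {n : ℕ} (G : SimpleGraph (Fin n))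
    (s : Fin n → ℕ) (hmono : Monotone s)
    (h2 : ∀ i : Fin n, Nat.card {j : Fin n // G.Adj i j ∧ i < j} ≤ s i) :
    (∀ i : Fin n, s i ≤ Nat.card {j : Fin n // G.Adj i j ∧ s i ≤ s j}) ↔
      (∀ i : Fin n, shellIndex G i = s i) := by
  constructor
  · intro h1 i
    exact le_antisymm (shellIndex_le_of_card_adj_lt_le G hmono h2 i)
      (le_shellIndex_of_le_card_adj G h1 i)
  · intro hsh
    obtain rfl : s = shellIndex G := funext fun i => (hsh i).symm
    exact shellIndex_le_card_adj_shellIndex_le G
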